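/- arXiv:2311.03981 — 5 statements merged into one kernel-verified Lean document; each statement's English description precedes it below -/
import Mathlib

section
/- Every coset identity of a group G gives rise to a non-singular mixed identity: if w ∈ F_r is a non-trivial reduced word, H ≤ G a subgroup of finite index, and g₁H,…,g_rH cosets such that w(h₁,…,h_r) = 1 for all h_i ∈ g_iH, then with d = [G:H]! the word w'(x₁,…,x_r) := w(g₁x₁^d, …, g_r x_r^d) ∈ G ∗ F_r satisfies w'(k₁,…,k_r) = 1 for all k₁,…,k_r ∈ G, and w' has non-trivial content (its image under the augmentation map G ∗ F_r → F_r is non-trivial). -/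
open Monoid
open scoped Pointwise

lemma pow_index_factorial_mem {G : Type*} [Group G] (H : Subgroup G) [H.FiniteIndex] (k : G) :
    k ^ Nat.factorial H.index ∈ H := by
  classical
  have : Finite (G ⧸ H) := H.finite_quotient_of_finiteIndex
  have := Fintype.ofFinite (G ⧸ H)
  have hker : k ^ Nat.factorial H.index ∈ (MulAction.toPermHom G (G ⧸ H)).ker := by
    rw [MonoidHom.mem_ker, map_pow]
    have hcard : Fintype.card (Equiv.Perm (G ⧸ H)) = Nat.factorial H.index := by
      rw [Fintype.card_perm, Subgroup.index, Nat.card_eq_fintype_card]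
    rw [← hcard, pow_card_eq_one]
  exact Subgroup.normalCore_le H (by rwa [Subgroup.normalCore_eq_ker])

open Monoid
open scoped Pointwise

namespace FreeGroup

variable {α : Type*} [DecidableEq α]

/-- non-cancellation predicate on adjacent letters -/
def NC (a b : α × Bool) : Prop := ¬(a.1 = b.1 ∧ a.2 = !b.2)

lemma nc_refl (a : α × Bool) : NC a a := by simp [NC]

lemma reduce_eq_self_of_chain : ∀ {L : List (α × Bool)}, List.Chain' NC L → reduce L = L
  | [], _ => rfl
  | x :: L, h => by
    unfold List.Chain' at h; rw [List.isChain_cons] at h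
    have ih := reduce_eq_self_of_chain h.2
    rw [reduce.cons, ih]
    cases L with
    | nil => rfl
    | cons hd tl =>
      have : ¬(x.1 = hd.1 ∧ x.2 = !hd.2) := h.1 hd rfl
      simp [this]

lemma chain_of_reduce_eq_self : ∀ {L : List (α × Bool)}, reduce L = L → List.Chain' NC L
  | [], _ => List.isChain_nil
  | x :: L, h => by
    rw [reduce.cons] at h
    cases hr : reduce L with
    | nil =>
      rw [hr] at h
      have : L = [] := by simpa using congrArg List.tail h
      subst this; exact List.isChain_singleton _
    | cons hd tl =>
      rw [hr] at h
      have h' : (if x.1 = hd.1 ∧ x.2 = !hd.2 then tl else x :: hd :: tl) = x :: L := h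
      by_cases hc : x.1 = hd.1 ∧ x.2 = !hd.2
      · rw [if_pos hc] at h'
        exfalso
        have hlen : tl.length + 1 ≤ L.length := by
          have := (reduce.red (L := L)).length_le
          rw [hr] at this
          simpa using this
        have h2 : tl.length = L.length + 1 := by
          have := congrArg List.length h'
          simpa using this
        omega
      · rw [if_neg hc] at h'
        have hL : L = hd :: tl := by
          have := congrArg List.tail h'
          simpa using this.symm
        subst hL
        unfold List.Chain'; rw [List.isChain_cons]
        refine ⟨fun b hb => ?_, chain_of_reduce_eq_self hr⟩
        have : b = hd := by
          simp at hb; first | exact hb | exact hb.symm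
        subst this
        exact hc

lemma of_pow_eq_mk (a : α) (d : ℕ) : (of a : FreeGroup α) ^ d = mk (List.replicate d (a, true)) :=
  toWord_injective (by rw [toWord_of_pow, toWord_mk, reduce_replicate])

lemma lift_pow_mk (d : ℕ) : ∀ L : List (α × Bool),
    FreeGroup.lift (fun i => (of i : FreeGroup α) ^ d) (mk L) =
      mk (L.flatMap fun x => List.replicate d x)
  | [] => by rw [← one_eq_mk, _root_.map_one, List.flatMap_nil, one_eq_mk]
  | x :: L => by
    have h1 : (mk [x] : FreeGroup α) * mk L = mk (x :: L) := by rw [mul_mk]; rfl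
    rw [← h1, _root_.map_mul, lift_pow_mk d L]
    have h2 : FreeGroup.lift (fun i => (of i : FreeGroup α) ^ d) (mk [x]) =
        mk (List.replicate d x) := by
      obtain ⟨a, b⟩ := x
      cases b with
      | true =>
        have : (mk [(a, true)] : FreeGroup α) = of a := rfl
        rw [this, lift_apply_of, of_pow_eq_mk]
      | false =>
        have : (mk [(a, false)] : FreeGroup α) = (of a)⁻¹ := by
          rw [show ([(a, false)] : List (α × Bool)) = invRev [(a, true)] by simp [invRev],
            ← inv_mk]; rfl
        rw [this, _root_.map_inv, lift_apply_of, of_pow_eq_mk, inv_mk]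
        congr 1
        simp [invRev, List.map_replicate]
    rw [h2, mul_mk, ← List.flatMap_cons]

lemma chain_flatMap_replicate {d : ℕ} (hd : d ≠ 0) :
    ∀ {L : List (α × Bool)}, List.Chain' NC L →
      List.Chain' NC (L.flatMap fun x => List.replicate d x)
  | [], _ => List.isChain_nil
  | x :: L, h => by
    unfold List.Chain' at h; rw [List.isChain_cons] at h
    rw [List.flatMap_cons]
    refine List.IsChain.append (List.isChain_replicate_of_rel d (nc_refl x))
      (chain_flatMap_replicate hd h.2) ?_
    intro a ha b hb
    obtain ⟨e, rfl⟩ := Nat.exists_eq_succ_of_ne_zero hd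
    have ha' : a = x := by
      rw [List.replicate_succ', List.getLast?_append_of_ne_nil _ (by simp)] at ha
      simp at ha; first | exact ha | exact ha.symm
    cases L with
    | nil => simp at hb
    | cons y L' =>
      have hb' : b = y := by
        rw [List.flatMap_cons, List.replicate_succ, List.cons_append] at hb
        simp at hb; first | exact hb | exact hb.symm
      rw [ha', hb']
      exact h.1 y rfl

end FreeGroup

/-- Every coset identity of a group `G` gives rise to a non-singular mixed identity:
if `w ∈ F_r` is a non-trivial word, `H ≤ G` has finite index, and `w` vanishes on the
cosets `g₁H, …, g_rH`, then with `d = [G:H]!` the word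
`w'(x₁,…,x_r) = w(g₁x₁^d, …, g_r x_r^d) ∈ G ∗ F_r` vanishes identically on `G`
and has non-trivial content. -/
theorem coset_identity_gives_nonsingular_mixed_identity {G : Type*} [Group G] {r : ℕ}
    (w : FreeGroup (Fin r)) (hw : w ≠ 1)
    (H : Subgroup G) [H.FiniteIndex] (g : Fin r → G)
    (hcoset : ∀ h : Fin r → G, (∀ i, h i ∈ (g i) • (H : Set G)) → FreeGroup.lift h w = 1) :
    (∀ k : Fin r → G,
      Coprod.lift (MonoidHom.id G) (FreeGroup.lift k)
        (FreeGroup.lift (fun i => Coprod.inl (g i) *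
          (Coprod.inr (FreeGroup.of i) : Coprod G (FreeGroup (Fin r))) ^ Nat.factorial H.index) w) = 1) ∧
    Coprod.lift (1 : G →* FreeGroup (Fin r)) (MonoidHom.id (FreeGroup (Fin r)))
      (FreeGroup.lift (fun i => Coprod.inl (g i) *
        (Coprod.inr (FreeGroup.of i) : Coprod G (FreeGroup (Fin r))) ^ Nat.factorial H.index) w) ≠ 1 := by
  set d := Nat.factorial H.index with hd
  set fam : Fin r → Coprod G (FreeGroup (Fin r)) := fun i => Coprod.inl (g i) *
    (Coprod.inr (FreeGroup.of i) : Coprod G (FreeGroup (Fin r))) ^ d with hfam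
  constructor
  · intro k
    have h1 : ∀ x, ((Coprod.lift (MonoidHom.id G) (FreeGroup.lift k)).comp
        (FreeGroup.lift fam)) (FreeGroup.of x) = g x * (k x) ^ d := by
      intro x
      simp [hfam]
    have h2 := (FreeGroup.lift_unique (f := fun i => g i * (k i) ^ d)
      ((Coprod.lift (MonoidHom.id G) (FreeGroup.lift k)).comp (FreeGroup.lift fam)) h1
      (x := w))
    have h3 : FreeGroup.lift (fun i => g i * (k i) ^ d) w = 1 := by
      apply hcoset
      intro i
      exact Set.mem_smul_set.mpr ⟨(k i) ^ d, pow_index_factorial_mem H (k i), rfl⟩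
    calc Coprod.lift (MonoidHom.id G) (FreeGroup.lift k) (FreeGroup.lift fam w)
        = ((Coprod.lift (MonoidHom.id G) (FreeGroup.lift k)).comp (FreeGroup.lift fam)) w := rfl
      _ = 1 := by rw [h2, h3]
  · have h1 : ∀ x, ((Coprod.lift (1 : G →* FreeGroup (Fin r))
        (MonoidHom.id (FreeGroup (Fin r)))).comp (FreeGroup.lift fam)) (FreeGroup.of x)
        = FreeGroup.of x ^ d := by
      intro x
      simp [hfam]
    have h2 := (FreeGroup.lift_unique (f := fun i => (FreeGroup.of i : FreeGroup (Fin r)) ^ d)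
      ((Coprod.lift (1 : G →* FreeGroup (Fin r)) (MonoidHom.id (FreeGroup (Fin r)))).comp
        (FreeGroup.lift fam)) h1 (x := w))
    have h3 : FreeGroup.lift (fun i => (FreeGroup.of i : FreeGroup (Fin r)) ^ d) w
        = FreeGroup.mk (w.toWord.flatMap fun x => List.replicate d x) := by
      conv_lhs => rw [← FreeGroup.mk_toWord (x := w)]
      exact FreeGroup.lift_pow_mk d w.toWord
    have hne : FreeGroup.mk (w.toWord.flatMap fun x => List.replicate d x) ≠ 1 := by
      intro hcon
      have hred : FreeGroup.reduce (w.toWord.flatMap fun x => List.replicate d x)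
          = w.toWord.flatMap fun x => List.replicate d x :=
        FreeGroup.reduce_eq_self_of_chain
          (FreeGroup.chain_flatMap_replicate (Nat.factorial_ne_zero _)
            (FreeGroup.chain_of_reduce_eq_self (FreeGroup.reduce_toWord w)))
      have : (FreeGroup.mk (w.toWord.flatMap fun x => List.replicate d x)).toWord = [] := by
        rw [hcon, FreeGroup.toWord_one]
      rw [FreeGroup.toWord_mk, hred] at this
      have hwnil : w.toWord ≠ [] := fun hnil => hw (FreeGroup.toWord_eq_nil_iff.mp hnil)
      cases hL : w.toWord with
      | nil => exact hwnil hL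
      | cons a t =>
        rw [hL, List.flatMap_cons] at this
        have hlen := congrArg List.length this
        simp at hlen
        exact Nat.factorial_ne_zero _ hlen.1
    intro hcon
    apply hne
    rw [← h3, ← h2]
    exact hcon
end

section
/- Let g ∈ GL(V) act as the scalar λ on a subspace W ≤ V of finite codimension n, and let U ≤ V be a complement of W (so U ⊕ W = V). Then U' := U + U·g is a g-invariant subspace of dimension at most 2n, and there exists a subspace W' ≤ W with U' ⊕ W' = V. -/
/-- If `g ∈ GL(V)` acts as the scalar `μ` on a subspace `W` of finite codimension `n`
and `U` is a complement of `W`, then `U' = U + U·g` is a `g`-invariant subspace of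
dimension at most `2n`, and there is a subspace `W' ≤ W` complementing `U'` in `V`. -/
theorem invariant_complement_lemma {K V : Type*} [Field K] [AddCommGroup V] [Module K V]
    (g : (Module.End K V)ˣ) (μ : Kˣ) (W U : Submodule K V) (n : ℕ)
    [Module.Finite K (V ⧸ W)] (hcodim : Module.finrank K (V ⧸ W) = n)
    (hscal : ∀ w ∈ W, (g : Module.End K V) w = (μ : K) • w)
    (hUW : IsCompl U W) :
    Submodule.map (g : Module.End K V) (U ⊔ Submodule.map (g : Module.End K V) U) ≤
        U ⊔ Submodule.map (g : Module.End K V) U ∧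
    Module.Finite K ↥(U ⊔ Submodule.map (g : Module.End K V) U) ∧
    Module.finrank K ↥(U ⊔ Submodule.map (g : Module.End K V) U) ≤ 2 * n ∧
    ∃ W' : Submodule K V, W' ≤ W ∧
      IsCompl (U ⊔ Submodule.map (g : Module.End K V) U) W' := by
  set G : Module.End K V := (g : Module.End K V) with hG
  set U' : Submodule K V := U ⊔ Submodule.map G U with hU'
  -- the linear equivalence underlying g
  let e : V ≃ₗ[K] V := LinearMap.GeneralLinearGroup.generalLinearEquiv K V g
  have he : (e : V →ₗ[K] V) = G := by
    simp [e, LinearMap.GeneralLinearGroup.generalLinearEquiv_to_linearMap]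
    rfl
  -- U is finite dimensional of rank n
  have equivU : (V ⧸ W) ≃ₗ[K] U := Submodule.quotientEquivOfIsCompl W U hUW.symm
  have hUfin : Module.Finite K U := Module.Finite.equiv equivU
  have hUrank : Module.finrank K U = n := by
    rw [← equivU.finrank_eq, hcodim]
  have hmapfin : Module.Finite K (Submodule.map G U) := by
    rw [← he]
    exact Module.Finite.equiv (Submodule.equivMapOfInjective _ e.injective U)
  have hmaprank : Module.finrank K (Submodule.map G U) = n := by
    rw [← he, LinearEquiv.finrank_map_eq, hUrank]
  -- invariance
  have hinv : Submodule.map G U' ≤ U' := by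
    rw [hU', Submodule.map_sup]
    refine sup_le (le_sup_right) ?_
    rw [← Submodule.map_comp]
    rintro x ⟨u, hu, rfl⟩
    -- decompose g u = u₁ + w
    have : G u ∈ U ⊔ W := by rw [hUW.sup_eq_top]; trivial
    obtain ⟨u₁, hu₁, w, hw, hsum⟩ := Submodule.mem_sup.mp this
    have hGw : G w = (μ : K) • w := hscal w hw
    have hw_eq : w = G u - u₁ := by rw [← hsum]; abel
    have : (G ∘ₗ G) u = G u₁ + (μ : K) • (G u) - (μ : K) • u₁ := by
      have : G (G u) = G (u₁ + w) := by rw [hsum]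
      rw [LinearMap.comp_apply, this, map_add, hGw, hw_eq, smul_sub]
      abel
    rw [this]
    have h1 : G u₁ ∈ U' := le_sup_right (a := U) ⟨u₁, hu₁, rfl⟩
    have h2 : (μ : K) • (G u) ∈ U' :=
      Submodule.smul_mem _ _ (le_sup_right (a := U) ⟨u, hu, rfl⟩)
    have h3 : (μ : K) • u₁ ∈ U' := Submodule.smul_mem _ _ (le_sup_left (b := Submodule.map G U) hu₁)
    exact sub_mem (add_mem h1 h2) h3
  have hU'fin : Module.Finite K U' := by
    rw [hU']; infer_instance
  have hU'rank : Module.finrank K U' ≤ 2 * n := by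
    have h := Submodule.finrank_sup_add_finrank_inf_eq U (Submodule.map G U)
    rw [hUrank, hmaprank] at h
    rw [hU']
    omega
  refine ⟨hinv, hU'fin, hU'rank, ?_⟩
  -- build the complement W' inside W
  obtain ⟨q, hq⟩ := Submodule.exists_isCompl ((U' ⊓ W).comap W.subtype)
  refine ⟨q.map W.subtype, Submodule.map_subtype_le _ _, ?_⟩
  constructor
  · rw [disjoint_iff]
    ext x
    simp only [Submodule.mem_inf, Submodule.mem_bot]
    constructor
    · rintro ⟨hx1, hx2⟩
      obtain ⟨⟨y, hy⟩, hyq, rfl⟩ := hx2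
      have hmem : (⟨y, hy⟩ : W) ∈ (U' ⊓ W).comap W.subtype ⊓ q :=
        ⟨Submodule.mem_comap.mpr ⟨hx1, hy⟩, hyq⟩
      rw [hq.inf_eq_bot] at hmem
      simpa using congrArg W.subtype hmem
    · rintro rfl; exact ⟨Submodule.zero_mem _, Submodule.zero_mem _⟩
  · rw [codisjoint_iff, eq_top_iff, ← hUW.sup_eq_top]
    have hWeq : (U' ⊓ W) ⊔ q.map W.subtype = W := by
      have : Submodule.map W.subtype ((U' ⊓ W).comap W.subtype) = U' ⊓ W := by
        rw [Submodule.map_comap_subtype]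
        exact inf_of_le_right inf_le_right
      calc (U' ⊓ W) ⊔ q.map W.subtype
          = Submodule.map W.subtype ((U' ⊓ W).comap W.subtype ⊔ q) := by
            rw [Submodule.map_sup, this]
        _ = W := by rw [hq.sup_eq_top, Submodule.map_top, Submodule.range_subtype]
    calc U ⊔ W = U ⊔ ((U' ⊓ W) ⊔ q.map W.subtype) := by rw [hWeq]
      _ ≤ U' ⊔ (U' ⊔ q.map W.subtype) := by
          refine sup_le_sup le_sup_left (sup_le_sup_right inf_le_left _)
      _ = U' ⊔ q.map W.subtype := by rw [← sup_assoc, sup_idem]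
end

section
/- Let K be a finite field with q elements and V a K-vector space of finite dimension n. Let c ∈ GL(V), let d, l ≥ 1, and suppose that for every eigenvalue λ of c the geometric multiplicity d_λ satisfies n − d_λ > dl. Let A, B ≤ V be subspaces of dimension at most dl − 1. Then the number of vectors v ∈ V such that v·(c − λ) ∈ B for some λ ∈ K, or v ∈ A, is strictly less than qⁿ − 1; in particular there exists a nonzero vector v ∈ V with v ∉ A and v·(c − λ) ∉ B for all λ ∈ K. -/
open Module Set

/-- `finrank` of a comap is at most `finrank ker + finrank` of the target submodule. -/
lemma finrank_comap_le_aux {K V W : Type*} [Field K] [AddCommGroup V] [Module K V]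
    [AddCommGroup W] [Module K W] [FiniteDimensional K V] [FiniteDimensional K W]
    (f : V →ₗ[K] W) (B : Submodule K W) :
    finrank K (Submodule.comap f B) ≤ finrank K (LinearMap.ker f) + finrank K B := by
  have h := LinearMap.finrank_range_add_finrank_ker (f.domRestrict (Submodule.comap f B))
  have hle : LinearMap.ker f ≤ Submodule.comap f B := fun x hx => by
    simp only [Submodule.mem_comap, LinearMap.mem_ker.mp hx, Submodule.zero_mem]
  rw [LinearMap.ker_domRestrict, (Submodule.comapSubtypeEquivOfLe hle).finrank_eq] at h
  have h2 : finrank K (LinearMap.range (f.domRestrict (Submodule.comap f B))) ≤ finrank K B := by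
    rw [LinearMap.range_domRestrict]
    exact Submodule.finrank_mono (Submodule.map_comap_le f B)
  omega

lemma ncard_biUnion_le_aux {α ι : Type*} [Fintype α] (t : Finset ι) (s : ι → Set α) :
    (⋃ i ∈ t, s i).ncard ≤ ∑ i ∈ t, (s i).ncard := by
  classical
  induction t using Finset.induction with
  | empty => simp
  | insert _ _ h ih =>
    rw [Finset.set_biUnion_insert, Finset.sum_insert h]
    exact (Set.ncard_union_le _ _).trans (Nat.add_le_add_left ih _)

/-- The key counting step over a finite field: if `c ∈ GL(F_q^n)` is such that every
eigenvalue `λ` has geometric multiplicity `d_λ` with `n - d_λ > dl`, and `A, B` are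
subspaces of dimension at most `dl - 1`, then the number of vectors `v` with `v ∈ A` or
`v·(c - λ) ∈ B` for some `λ ∈ K` is strictly less than `qⁿ - 1`; in particular there is a
nonzero vector `v ∉ A` with `v·(c - λ) ∉ B` for all `λ ∈ K`. -/
theorem counting_step_finite_field {K : Type*} [Field K] [Fintype K] {n d l : ℕ}
    (hd : 1 ≤ d) (hl : 1 ≤ l) (hdln : d * l < n)
    (c : (Module.End K (Fin n → K))ˣ)
    (heig : ∀ lam : K,
      LinearMap.ker ((c : Module.End K (Fin n → K)) - lam • 1) ≠ ⊥ →
      d * l + Module.finrank K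
        (LinearMap.ker ((c : Module.End K (Fin n → K)) - lam • 1)) < n)
    (A B : Submodule K (Fin n → K))
    (hA : Module.finrank K A ≤ d * l - 1) (hB : Module.finrank K B ≤ d * l - 1) :
    Nat.card {v : Fin n → K | v ∈ A ∨
        ∃ lam : K, ((c : Module.End K (Fin n → K)) - lam • 1) v ∈ B} <
      Fintype.card K ^ n - 1 ∧
    ∃ v : Fin n → K, v ≠ 0 ∧ v ∉ A ∧
      ∀ lam : K, ((c : Module.End K (Fin n → K)) - lam • 1) v ∉ B := by
  classical
  obtain ⟨q, hqdef⟩ : ∃ q, Fintype.card K = q := ⟨_, rfl⟩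
  have hq : 2 ≤ q := hqdef ▸ Fintype.one_lt_card
  have hdl1 : 1 ≤ d * l := Nat.one_le_iff_ne_zero.mpr (by positivity)
  have hn2 : 2 ≤ n := by omega
  -- rank bounds
  have hCrank : ∀ lam : K,
      finrank K (Submodule.comap ((c : Module.End K (Fin n → K)) - lam • 1) B) ≤ n - 2 := by
    intro lam
    have h1 := finrank_comap_le_aux ((c : Module.End K (Fin n → K)) - lam • 1) B
    by_cases hker : LinearMap.ker ((c : Module.End K (Fin n → K)) - lam • 1) = ⊥
    · rw [hker] at h1
      simp only [finrank_bot] at h1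
      omega
    · have h2 := heig lam hker
      omega
  have hArank : finrank K A ≤ n - 2 := by omega
  -- cardinality of a submodule
  have cardSub : ∀ W : Submodule K (Fin n → K),
      ((W : Set (Fin n → K))).ncard = q ^ finrank K W := by
    intro W
    rw [← Nat.card_coe_set_eq]
    have h1 : Nat.card W = Fintype.card W := Nat.card_eq_fintype_card
    rw [show ((W : Set (Fin n → K)) : Type _) = W from rfl, h1,
      Module.card_eq_pow_finrank (K := K) (V := W), hqdef]
  -- counting the pieces with `0` removed
  have hcardA : ((A : Set (Fin n → K)) \ {0}).ncard ≤ q ^ (n - 2) - 1 := by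
    rw [Set.ncard_diff_singleton_of_mem A.zero_mem, cardSub]
    have h1 : q ^ finrank K A ≤ q ^ (n - 2) := Nat.pow_le_pow_right (by omega) hArank
    omega
  have hcardC : ∀ lam : K,
      (((Submodule.comap ((c : Module.End K (Fin n → K)) - lam • 1) B : Submodule K _) :
        Set (Fin n → K)) \ {0}).ncard ≤ q ^ (n - 2) - 1 := by
    intro lam
    rw [Set.ncard_diff_singleton_of_mem (Submodule.zero_mem _), cardSub]
    have h1 : q ^ finrank K (Submodule.comap ((c : Module.End K (Fin n → K)) - lam • 1) B) ≤
        q ^ (n - 2) := Nat.pow_le_pow_right (by omega) (hCrank lam)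
    omega
  -- the key set and the covering
  have hsub : {v : Fin n → K | v ∈ A ∨
        ∃ lam : K, ((c : Module.End K (Fin n → K)) - lam • 1) v ∈ B} ⊆
      insert (0 : Fin n → K)
      (((A : Set (Fin n → K)) \ {0}) ∪ ⋃ lam ∈ (Finset.univ : Finset K),
        (((Submodule.comap ((c : Module.End K (Fin n → K)) - lam • 1) B : Submodule K _) :
          Set (Fin n → K)) \ {0})) := by
    intro v hv
    by_cases hv0 : v = 0
    · rw [hv0]; exact Set.mem_insert _ _
    · refine Set.mem_insert_of_mem _ ?_
      rcases hv with h | ⟨lam, hlam⟩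
      · exact Set.mem_union_left _ ⟨h, hv0⟩
      · exact Set.mem_union_right _ (Set.mem_biUnion (Finset.mem_univ lam) ⟨hlam, hv0⟩)
  have hcount : ({v : Fin n → K | v ∈ A ∨
        ∃ lam : K, ((c : Module.End K (Fin n → K)) - lam • 1) v ∈ B}).ncard ≤
      1 + (q ^ (n - 2) - 1) + q * (q ^ (n - 2) - 1) := by
    have h1 := Set.ncard_le_ncard hsub (Set.toFinite _)
    have h2 := Set.ncard_insert_le (0 : Fin n → K)
      (((A : Set (Fin n → K)) \ {0}) ∪ ⋃ lam ∈ (Finset.univ : Finset K),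
        (((Submodule.comap ((c : Module.End K (Fin n → K)) - lam • 1) B : Submodule K _) :
          Set (Fin n → K)) \ {0}))
    have h3 := Set.ncard_union_le ((A : Set (Fin n → K)) \ {0})
      (⋃ lam ∈ (Finset.univ : Finset K),
        (((Submodule.comap ((c : Module.End K (Fin n → K)) - lam • 1) B : Submodule K _) :
          Set (Fin n → K)) \ {0}))
    have h4 := ncard_biUnion_le_aux (Finset.univ : Finset K)
      (fun lam => (((Submodule.comap ((c : Module.End K (Fin n → K)) - lam • 1) B :
          Submodule K _) : Set (Fin n → K)) \ {0}))
    have h5 : ∑ lam ∈ (Finset.univ : Finset K),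
        (((Submodule.comap ((c : Module.End K (Fin n → K)) - lam • 1) B : Submodule K _) :
          Set (Fin n → K)) \ {0}).ncard ≤ q * (q ^ (n - 2) - 1) := by
      calc ∑ lam ∈ (Finset.univ : Finset K),
          (((Submodule.comap ((c : Module.End K (Fin n → K)) - lam • 1) B : Submodule K _) :
            Set (Fin n → K)) \ {0}).ncard
          ≤ ∑ _lam ∈ (Finset.univ : Finset K), (q ^ (n - 2) - 1) :=
            Finset.sum_le_sum fun lam _ => hcardC lam
        _ = q * (q ^ (n - 2) - 1) := by
            rw [Finset.sum_const, Finset.card_univ, hqdef, smul_eq_mul]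
    omega
  -- the arithmetic inequality
  have harith : 1 + (q ^ (n - 2) - 1) + q * (q ^ (n - 2) - 1) < q ^ n - 1 := by
    obtain ⟨m, rfl⟩ : ∃ m, n = m + 2 := ⟨n - 2, by omega⟩
    obtain ⟨s, hs⟩ : ∃ s, q ^ m = s + 1 :=
      ⟨q ^ m - 1, by have := Nat.one_le_pow m q (by omega); omega⟩
    have h2 : q ^ (m + 2) = (s + 1) * q * q := by rw [pow_succ, pow_succ, hs]
    have h3 : q ^ (m + 2 - 2) = s + 1 := by simpa using hs
    rw [h2, h3]
    have key : 3 + s + q * s ≤ (s + 1) * q * q := by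
      have k1 : 2 * (q * s) ≤ q * (q * s) := Nat.mul_le_mul_right _ hq
      have k2 : 1 * s ≤ q * s := Nat.mul_le_mul_right _ (by omega)
      have k3 : 2 * 2 ≤ q * q := Nat.mul_le_mul hq hq
      have k4 : (s + 1) * q * q = q * (q * s) + q * q := by ring
      rw [k4]
      omega
    have h4 : q * (s + 1 - 1) = q * s := by simp
    rw [h4]
    have h5 : s + 1 - 1 = s := by omega
    rw [h5]
    generalize (s + 1) * q * q = T at key ⊢
    generalize q * s = P at key ⊢
    omega
  have hmain : Nat.card {v : Fin n → K | v ∈ A ∨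
        ∃ lam : K, ((c : Module.End K (Fin n → K)) - lam • 1) v ∈ B} < q ^ n - 1 := by
    rw [Nat.card_coe_set_eq]
    omega
  rw [hqdef]
  refine ⟨hmain, ?_⟩
  -- existence of a good vector
  have hne : {v : Fin n → K | v ∈ A ∨
        ∃ lam : K, ((c : Module.End K (Fin n → K)) - lam • 1) v ∈ B} ≠ Set.univ := by
    intro h
    rw [h, Nat.card_coe_set_eq, Set.ncard_univ, Nat.card_eq_fintype_card,
      Fintype.card_pi, Finset.prod_const, Finset.card_univ, Fintype.card_fin, hqdef] at hmain
    have h1 : 1 ≤ q ^ n := Nat.one_le_pow _ _ (by omega)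
    omega
  obtain ⟨v, hv⟩ : ∃ v, v ∉ {v : Fin n → K | v ∈ A ∨
        ∃ lam : K, ((c : Module.End K (Fin n → K)) - lam • 1) v ∈ B} := by
    by_contra h
    push_neg at h
    exact hne (Set.eq_univ_of_forall h)
  rw [Set.mem_setOf_eq] at hv
  push_neg at hv
  refine ⟨v, ?_, hv.1, hv.2⟩
  intro h0
  exact hv.1 (h0 ▸ A.zero_mem)
end

section
/- Let G be a group with a bi-invariant pseudometric d, and let w ∈ G ∗ F_r be a word with constants. If w' is obtained from w by deleting one constant c_j (and performing the resulting cancellation of two adjacent inverse letters), then for all h₁,…,h_r ∈ G one has d(w(h₁,…,h_r), w'(h₁,…,h_r)) ≤ d(c_j, 1); consequently |diam(w(G^r)) − diam(w'(G^r))| ≤ 2·d(c_j, 1). -/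
/-- Deleting one constant `c` of a word with constants (with the resulting cancellation
`x^ε c x^{-ε} ↦ 1`) moves every value of the word map by at most `d(c, 1)` with respect to
a bi-invariant pseudometric `d`; consequently the diameters of the two word images differ
by at most `2·d(c, 1)`. -/
theorem delete_constant_estimate {G : Type*} [Group G] {r : ℕ} (d : G → G → ℝ)
    (hrefl : ∀ a, d a a = 0) (hsymm : ∀ a b, d a b = d b a)
    (htri : ∀ a b c, d a c ≤ d a b + d b c)
    (hleft : ∀ f a b, d (f * a) (f * b) = d a b)
    (hright : ∀ f a b, d (a * f) (b * f) = d a b)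
    -- `u h` and `v h` are the evaluations of the prefix and suffix of the word around the
    -- deleted constant `c`, which sits between `x_k^ε` and `x_k^{-ε}`:
    (u v : (Fin r → G) → G) (c : G) (k : Fin r) (ε : ℤ) :
    (∀ h : Fin r → G,
      d (u h * (h k) ^ ε * c * (h k) ^ (-ε) * v h) (u h * v h) ≤ d c 1) ∧
    |sSup {x : ℝ | ∃ h h' : Fin r → G,
        x = d (u h * (h k) ^ ε * c * (h k) ^ (-ε) * v h)
              (u h' * (h' k) ^ ε * c * (h' k) ^ (-ε) * v h')} -
      sSup {x : ℝ | ∃ h h' : Fin r → G, x = d (u h * v h) (u h' * v h')}| ≤ 2 * d c 1 := by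
  -- abbreviations
  set wv : (Fin r → G) → G := fun h => u h * (h k) ^ ε * c * (h k) ^ (-ε) * v h with hwv
  set wv' : (Fin r → G) → G := fun h => u h * v h with hwv'
  have hnonneg : ∀ a b, 0 ≤ d a b := by
    intro a b
    have h1 := htri a b a
    rw [hrefl a, hsymm b a] at h1
    linarith
  have hdc : 0 ≤ d c 1 := hnonneg c 1
  have hpt : ∀ h : Fin r → G, d (wv h) (wv' h) = d c 1 := by
    intro h
    set g := (h k) ^ ε with hg
    have h1 : wv h = u h * (g * c * g⁻¹) * v h := by
      simp only [hwv, zpow_neg, hg, mul_assoc]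
    calc d (wv h) (wv' h) = d (u h * (g * c * g⁻¹) * v h) (u h * v h) := by rw [h1]
      _ = d (u h * (g * c * g⁻¹)) (u h) := hright (v h) _ _
      _ = d (g * c * g⁻¹) 1 := by
          have := hleft (u h) (g * c * g⁻¹) 1
          simpa using this
      _ = d (g * c) g := by
          have := hright g (g * c * g⁻¹) 1
          simpa [mul_assoc] using this.symm
      _ = d c 1 := by
          have := hleft g c 1
          simpa using this
  refine ⟨fun h => le_of_eq (hpt h), ?_⟩
  set A : Set ℝ := {x : ℝ | ∃ h h' : Fin r → G, x = d (wv h) (wv h')} with hA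
  set B : Set ℝ := {x : ℝ | ∃ h h' : Fin r → G, x = d (wv' h) (wv' h')} with hB
  have h0 : Fin r → G := fun _ => 1
  have hAne : A.Nonempty := ⟨d (wv h0) (wv h0), h0, h0, rfl⟩
  have hBne : B.Nonempty := ⟨d (wv' h0) (wv' h0), h0, h0, rfl⟩
  have keyAB : ∀ h h', d (wv h) (wv h') ≤ d (wv' h) (wv' h') + 2 * d c 1 := by
    intro h h'
    have t1 := htri (wv h) (wv' h) (wv h')
    have t2 := htri (wv' h) (wv' h') (wv h')
    have e1 := hpt h
    have e2 := hpt h'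
    rw [hsymm (wv' h') (wv h')] at t2
    linarith
  have keyBA : ∀ h h', d (wv' h) (wv' h') ≤ d (wv h) (wv h') + 2 * d c 1 := by
    intro h h'
    have t1 := htri (wv' h) (wv h) (wv' h')
    have t2 := htri (wv h) (wv h') (wv' h')
    have e1 := hpt h
    have e2 := hpt h'
    rw [hsymm (wv' h) (wv h)] at t1
    linarith
  by_cases hBb : BddAbove B
  · have hAb : BddAbove A := by
      refine ⟨sSup B + 2 * d c 1, ?_⟩
      rintro x ⟨h, h', rfl⟩
      have := le_csSup hBb (show d (wv' h) (wv' h') ∈ B from ⟨h, h', rfl⟩)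
      linarith [keyAB h h']
    have h1 : sSup A ≤ sSup B + 2 * d c 1 := by
      apply csSup_le hAne
      rintro x ⟨h, h', rfl⟩
      have := le_csSup hBb (show d (wv' h) (wv' h') ∈ B from ⟨h, h', rfl⟩)
      linarith [keyAB h h']
    have h2 : sSup B ≤ sSup A + 2 * d c 1 := by
      apply csSup_le hBne
      rintro x ⟨h, h', rfl⟩
      have := le_csSup hAb (show d (wv h) (wv h') ∈ A from ⟨h, h', rfl⟩)
      linarith [keyBA h h']
    rw [abs_le]
    constructor <;> linarith
  · have hAb : ¬ BddAbove A := by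
      intro ⟨M, hM⟩
      apply hBb
      refine ⟨M + 2 * d c 1, ?_⟩
      rintro x ⟨h, h', rfl⟩
      have := hM (show d (wv h) (wv h') ∈ A from ⟨h, h', rfl⟩)
      linarith [keyBA h h']
    rw [Real.sSup_of_not_bddAbove hAb, Real.sSup_of_not_bddAbove hBb]
    simpa using by linarith
end

section
/- Let V be a countably infinite dimensional vector space over F_q and let H ≤ GL(V) contain a non-scalar element h with ‖h‖ < ∞ (finite projective rank). Then H satisfies a mixed identity: there is n ∈ ℕ such that, with e the exponent of GL_{4n}(q), the word [h, x]^e ∈ H ∗ F₁ is a mixed identity for H, i.e., [h, g]^e = 1 for all g ∈ H (here [h,g] = h⁻¹g⁻¹hg after suitable normalization). -/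
open Matrix in
lemma aux_fromBlocks_mul {K : Type*} [Field K] {m k : ℕ}
    (A : Matrix (Fin m) (Fin m) K) (B : Matrix (Fin m) (Fin m) K) :
    (fromBlocks A (0 : Matrix (Fin m) (Fin k) K) 0 (1 : Matrix (Fin k) (Fin k) K)) *
      (fromBlocks B 0 0 1) = fromBlocks (A * B) 0 0 1 := by
  simp [Matrix.fromBlocks_multiply]

open Matrix in
/-- Any automorphism of a f.d. space of dimension ≤ N satisfies `x ^ exponent GL_N = 1`. -/
lemma aux_unit_pow_exponent {K X : Type*} [Field K] [AddCommGroup X] [Module K X]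
    [Module.Finite K X] {N : ℕ} (hle : Module.finrank K X ≤ N)
    (u : (Module.End K X)ˣ) :
    u ^ (Monoid.exponent (Matrix (Fin N) (Fin N) K)ˣ) = 1 := by
  set m := Module.finrank K X with hm
  set k := N - m with hk
  have hmk : m + k = N := by omega
  let b := Module.finBasis K X
  let α : Module.End K X ≃ₐ[K] Matrix (Fin m) (Fin m) K := LinearMap.toMatrixAlgEquiv b
  let eqv : (Fin m ⊕ Fin k) ≃ Fin N := finSumFinEquiv.trans (finCongr hmk)
  let φ : Matrix (Fin m) (Fin m) K →* Matrix (Fin N) (Fin N) K :=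
    { toFun := fun A => (Matrix.reindexAlgEquiv K K eqv) (fromBlocks A 0 0 1)
      map_one' := by simp only [Matrix.fromBlocks_one]; exact _root_.map_one _
      map_mul' := fun A B => by
        rw [← _root_.map_mul, aux_fromBlocks_mul] }
  have hφinj : Function.Injective φ := by
    intro A B hAB
    have h2 : fromBlocks A (0 : Matrix (Fin m) (Fin k) K) 0 (1 : Matrix (Fin k) (Fin k) K)
        = fromBlocks B 0 0 1 := (Matrix.reindexAlgEquiv K K eqv).injective hAB
    have := congrArg Matrix.toBlocks₁₁ h2
    simpa [Matrix.toBlocks_fromBlocks₁₁] using this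
  let ψ : (Module.End K X)ˣ →* (Matrix (Fin N) (Fin N) K)ˣ :=
    (Units.map φ).comp (Units.map (α : Module.End K X →* Matrix (Fin m) (Fin m) K))
  have hψ : ψ (u ^ Monoid.exponent (Matrix (Fin N) (Fin N) K)ˣ) = 1 := by
    rw [map_pow]; exact Monoid.pow_exponent_eq_one _
  have h1 : (φ (α ((u ^ Monoid.exponent (Matrix (Fin N) (Fin N) K)ˣ : _)).val)) = 1 :=
    congrArg Units.val hψ
  have h3 : α ((u ^ Monoid.exponent (Matrix (Fin N) (Fin N) K)ˣ : _)).val = 1 := by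
    apply hφinj; rw [h1, _root_.map_one]
  have h4 : ((u ^ Monoid.exponent (Matrix (Fin N) (Fin N) K)ˣ : _)).val = 1 := by
    apply α.injective; rw [h3, _root_.map_one]
  exact Units.ext h4

/-- If a subgroup `H ≤ GL(V)` of a countably infinite dimensional vector space over a
finite field contains a non-scalar element `h` of finite projective rank, then `H`
satisfies the mixed identity `[h, x]^e`, where `e` is the exponent of `GL_{4n}(q)` for a
suitable `n`. -/
theorem mixed_identity_from_finite_rank_element {K V : Type*} [Field K] [Fintype K]
    [AddCommGroup V] [Module K V]
    (hdim : Module.rank K V = Cardinal.aleph0)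
    (H : Subgroup (Module.End K V)ˣ) (h : (Module.End K V)ˣ) (hh : h ∈ H)
    (hnonscalar : ∀ μ : Kˣ, (h : Module.End K V) ≠ (μ : K) • (1 : Module.End K V))
    (hfinrank : ∃ μ : Kˣ,
      Module.Finite K
        ↥(LinearMap.range ((h : Module.End K V) - (μ : K) • (1 : Module.End K V)))) :
    ∃ n : ℕ, ∀ g ∈ H,
      (h⁻¹ * g⁻¹ * h * g) ^ (Monoid.exponent (Matrix (Fin (4 * n)) (Fin (4 * n)) K)ˣ) = 1 := by
  obtain ⟨μ, hμfin⟩ := hfinrank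
  set f : Module.End K V := (h : Module.End K V) - (μ : K) • 1 with hfdef
  set n : ℕ := Module.finrank K ↥(LinearMap.range f) with hndef
  refine ⟨n, fun g hg => ?_⟩
  set e : ℕ := Monoid.exponent (Matrix (Fin (4 * n)) (Fin (4 * n)) K)ˣ with hedef
  set c : (Module.End K V)ˣ := h⁻¹ * g⁻¹ * h * g with hcdef
  set cE : Module.End K V := (c : Module.End K V) with hcEdef
  have hinv_apply : ∀ (a : (Module.End K V)ˣ) (x : V),
      (↑a⁻¹ : Module.End K V) ((a : Module.End K V) x) = x := by
    intro a x
    calc (↑a⁻¹ : Module.End K V) ((a : Module.End K V) x)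
        = ((↑a⁻¹ * ↑a : Module.End K V)) x := rfl
      _ = ((1 : Module.End K V)) x := by
          rw [← Units.val_mul, inv_mul_cancel a, Units.val_one]
      _ = x := rfl
  set Kf : Submodule K V := LinearMap.ker f with hKf
  set K₂ : Submodule K V := Kf.comap (g : Module.End K V) with hK2
  set U : Submodule K V := Kf ⊓ K₂ with hU
  have heig : ∀ v ∈ Kf, (h : Module.End K V) v = (μ : K) • v := by
    intro v hv
    have h0 : f v = 0 := hv
    rw [hfdef, LinearMap.sub_apply, LinearMap.smul_apply, Module.End.one_apply,
      sub_eq_zero] at h0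
    exact h0
  have hfix : ∀ v ∈ U, cE v = v := by
    intro v hv
    obtain ⟨hv1, hv2⟩ := hv
    have hcomm : (h : Module.End K V) ((g : Module.End K V) v)
        = (g : Module.End K V) ((h : Module.End K V) v) := by
      rw [heig _ hv2, heig v hv1, map_smul]
    have hc1 : cE v = (↑h⁻¹ : Module.End K V) ((↑g⁻¹ : Module.End K V)
        ((h : Module.End K V) ((g : Module.End K V) v))) := by
      simp [hcEdef, hcdef, Module.End.mul_apply]
    rw [hc1, hcomm, hinv_apply g, hinv_apply h]
  haveI := hμfin
  haveI hQKf : Module.Finite K (V ⧸ Kf) :=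
    Module.Finite.equiv (f.quotKerEquivRange).symm
  have hQKf_rank : Module.finrank K (V ⧸ Kf) = n :=
    (f.quotKerEquivRange).finrank_eq
  set g' : V →ₗ[K] V ⧸ Kf := Kf.mkQ ∘ₗ (g : Module.End K V) with hg'
  have hK2ker : K₂ = LinearMap.ker g' := by
    rw [hg', LinearMap.ker_comp, Submodule.ker_mkQ]
  have hQK2equiv : (V ⧸ K₂) ≃ₗ[K] LinearMap.range g' := by
    rw [hK2ker]; exact g'.quotKerEquivRange
  haveI hQK2 : Module.Finite K (V ⧸ K₂) := Module.Finite.equiv hQK2equiv.symm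
  have hQK2_rank : Module.finrank K (V ⧸ K₂) ≤ n := by
    rw [hQK2equiv.finrank_eq, ← hQKf_rank]
    exact Submodule.finrank_le _
  set π : V →ₗ[K] (V ⧸ Kf) × (V ⧸ K₂) := Kf.mkQ.prod K₂.mkQ with hπ
  have hkerπ : LinearMap.ker π = U := by
    rw [hπ, LinearMap.ker_prod, Submodule.ker_mkQ, Submodule.ker_mkQ]
  have hQUequiv : (V ⧸ U) ≃ₗ[K] LinearMap.range π := by
    rw [← hkerπ]; exact π.quotKerEquivRange
  haveI hQU : Module.Finite K (V ⧸ U) := Module.Finite.equiv hQUequiv.symm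
  have hQU_rank : Module.finrank K (V ⧸ U) ≤ 2 * n := by
    rw [hQUequiv.finrank_eq]
    calc Module.finrank K (LinearMap.range π)
        ≤ Module.finrank K ((V ⧸ Kf) × (V ⧸ K₂)) := Submodule.finrank_le _
      _ = Module.finrank K (V ⧸ Kf) + Module.finrank K (V ⧸ K₂) := Module.finrank_prod
      _ ≤ 2 * n := by omega
  obtain ⟨T, hT⟩ := U.exists_isCompl
  have hTequiv : (V ⧸ U) ≃ₗ[K] T := Submodule.quotientEquivOfIsCompl U T hT
  haveI hTfin : Module.Finite K T := Module.Finite.equiv hTequiv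
  have hT_rank : Module.finrank K ↥T ≤ 2 * n := hTequiv.symm.finrank_eq ▸ hQU_rank
  set N : Submodule K V := LinearMap.range (cE - 1) with hN
  have hUker : U ≤ LinearMap.ker (cE - 1) := by
    intro v hv
    simp [LinearMap.mem_ker, LinearMap.sub_apply, hfix v hv]
  set d : (V ⧸ U) →ₗ[K] V := U.liftQ (cE - 1) hUker with hd
  have hNd : N = LinearMap.range d := (Submodule.range_liftQ _ _ _).symm
  haveI hNfin : Module.Finite K N := by
    rw [hNd]; exact Module.Finite.range d
  have hN_rank : Module.finrank K ↥N ≤ 2 * n := by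
    rw [hNd]
    exact le_trans (LinearMap.finrank_range_le d) hQU_rank
  set X : Submodule K V := N ⊔ T with hX
  haveI hXfin : Module.Finite K X := by
    rw [hX]; exact Submodule.finiteDimensional_sup N T
  have hX_rank : Module.finrank K ↥X ≤ 4 * n := by
    have h1 := Submodule.finrank_sup_add_finrank_inf_eq N T
    have h2 : Module.finrank K ↥X = Module.finrank K ↥(N ⊔ T) := by rw [hX]
    omega
  have hXinv : ∀ x ∈ X, cE x ∈ X := by
    intro x hx
    have h1 : (cE - 1) x ∈ N := LinearMap.mem_range_self _ x
    have h2 : cE x = (cE - 1) x + x := by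
      simp [LinearMap.sub_apply]
    rw [h2]
    exact X.add_mem (Submodule.mem_sup_left h1) hx
  set c' : ↥X →ₗ[K] ↥X := cE.restrict hXinv with hc'
  have hcEinj : Function.Injective cE :=
    ((Module.End.isUnit_iff cE).mp c.isUnit).injective
  have hc'inj : Function.Injective c' := by
    intro x y hxy
    apply Subtype.ext
    apply hcEinj
    have := congrArg Subtype.val hxy
    simpa [hc', LinearMap.restrict_apply] using this
  have hc'bij : Function.Bijective c' :=
    ⟨hc'inj, (LinearMap.injective_iff_surjective).mp hc'inj⟩
  have hcu : IsUnit c' := (Module.End.isUnit_iff c').mpr hc'bij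
  have hpow : hcu.unit ^ e = 1 := aux_unit_pow_exponent hX_rank hcu.unit
  have hc'pow : c' ^ e = 1 := by
    have h1 := congrArg Units.val hpow
    simpa [Units.val_pow_eq_pow_val, IsUnit.unit_spec] using h1
  have hXfix : ∀ x (hx : x ∈ X), (cE ^ e) x = x := by
    intro x hx
    have h5 : (cE ^ e).restrict (Module.End.pow_apply_mem_of_forall_mem e hXinv) = 1 := by
      rw [← Module.End.pow_restrict e hXinv]; exact hc'pow
    have h6 := congrArg (fun φ => Subtype.val (φ ⟨x, hx⟩)) h5
    simpa [LinearMap.restrict_apply] using h6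
  have hUfix : ∀ v ∈ U, (cE ^ e) v = v := by
    intro v hv
    induction e with
    | zero => simp
    | succ k ih =>
      rw [pow_succ, Module.End.mul_apply, hfix v hv]
      exact ih
  have htop : U ⊔ X = ⊤ := by
    have h1 : U ⊔ T = ⊤ := codisjoint_iff.mp hT.codisjoint
    have h2 : T ≤ X := le_sup_right
    exact top_unique (h1 ▸ sup_le_sup_left h2 U)
  apply Units.ext
  rw [Units.val_pow_eq_pow_val, Units.val_one]
  apply LinearMap.ext
  intro v
  have hv : v ∈ U ⊔ X := htop ▸ Submodule.mem_top
  obtain ⟨u, hu, x, hx, rfl⟩ := Submodule.mem_sup.mp hv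
  rw [Module.End.one_apply, map_add, hUfix u hu, hXfix x hx]
end
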